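/- arXiv:0903.2136 — 6 statements merged into one kernel-verified Lean document; each statement's English description precedes it below -/
import Mathlib

section
/- Let r ≥ 2 be a natural number, θ = 2π/r, and let R be the 3×3 rotation matrix about the z-axis with rows (cos θ, sin θ, 0), (−sin θ, cos θ, 0), (0, 0, 1). Let z ∈ ℝ and q = (q₁,q₂,q₃) ∈ ℝ³ with (0,0,z) ≠ q. Then Σ_{j=0}^{r−1} ((0,0,z) − Rʲq)/‖(0,0,z) − Rʲq‖³ = (0, 0, r·(z − q₃)/‖(0,0,z) − q‖³). In particular, the gravitational force exerted at a point of the vertical axis by a cyclic R-symmetric configuration of equal masses is parallel to the axis. -/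
/-!
The rotations `Rʲ` fix the axis point `p = (0,0,z)` and are isometries, so every summand is
`Rʲ (p - q) / ‖p - q‖³`, and the sum equals `(∑ⱼ Rʲ)(p - q) / ‖p - q‖³`. Since
`∑ⱼ cos (2πj/r) = ∑ⱼ sin (2πj/r) = 0` for `r ≥ 2` (after multiplication by `sin (π/r) ≠ 0`
these sums telescope to multiples of `sin π`), the matrix `∑ⱼ Rʲ` is `diag (0, 0, r)`.
-/

/-- ℝ³ with the Euclidean norm. -/
noncomputable def toE3 : (Fin 3 → ℝ) → EuclideanSpace ℝ (Fin 3) :=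
  (EuclideanSpace.equiv (Fin 3) ℝ).symm

open Real Finset Matrix

theorem sin_pi_div_ne_zero {r : ℕ} (hr : 2 ≤ r) : sin (π / r) ≠ 0 := by
  have hr' : (2 : ℝ) ≤ r := by exact_mod_cast hr
  refine (sin_pos_of_pos_of_lt_pi (by positivity) ?_).ne'
  rw [div_lt_iff₀ (by linarith)]
  nlinarith [pi_pos]

theorem sum_range_cos_mul_two_pi_div {r : ℕ} (hr : 2 ≤ r) :
    ∑ j ∈ range r, cos (j * (2 * π / r)) = 0 := by
  have h := Real.sin_mul_sum_cos r (2 * π / r) 0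
  have hr0 : (r : ℝ) ≠ 0 := by positivity
  field_simp at h ⊢
  simpa [sin_pi_div_ne_zero hr] using h

theorem sum_range_sin_mul_two_pi_div {r : ℕ} (hr : 2 ≤ r) :
    ∑ j ∈ range r, sin (j * (2 * π / r)) = 0 := by
  have h := Real.sin_mul_sum_sin r (2 * π / r) 0
  have hr0 : (r : ℝ) ≠ 0 := by positivity
  field_simp at h ⊢
  simpa [sin_pi_div_ne_zero hr] using h

noncomputable def rotationZ (θ : ℝ) : Matrix (Fin 3) (Fin 3) ℝ :=
  !![cos θ, sin θ, 0; -sin θ, cos θ, 0; 0, 0, 1]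

theorem rotationZ_add (a b : ℝ) : rotationZ (a + b) = rotationZ a * rotationZ b := by
  ext i k
  fin_cases i <;> fin_cases k <;>
    simp [rotationZ, mul_apply, Fin.sum_univ_three, cos_add, sin_add] <;> ring

theorem rotationZ_pow (θ : ℝ) (j : ℕ) : rotationZ θ ^ j = rotationZ (j * θ) := by
  induction j with
  | zero => simp [rotationZ, one_fin_three]
  | succ j ih => rw [pow_succ, ih, ← rotationZ_add]; push_cast; ring_nf

theorem rotationZ_mulVec_axis (θ z : ℝ) : rotationZ θ *ᵥ ![0, 0, z] = ![0, 0, z] := by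
  ext i
  fin_cases i <;> simp [rotationZ, mulVec, dotProduct, Fin.sum_univ_three]

theorem norm_toE3_rotationZ_mulVec (θ : ℝ) (v : Fin 3 → ℝ) :
    ‖toE3 (rotationZ θ *ᵥ v)‖ = ‖toE3 v‖ := by
  simp only [EuclideanSpace.norm_eq, Real.norm_eq_abs, sq_abs, Fin.sum_univ_three]
  congr 1
  simp [toE3, rotationZ, dotProduct, Fin.sum_univ_three]
  linear_combination (v 0 ^ 2 + v 1 ^ 2) * sin_sq_add_cos_sq θ

theorem sum_rotationZ_mul_two_pi_div {r : ℕ} (hr : 2 ≤ r) :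
    ∑ j ∈ range r, rotationZ (j * (2 * π / r)) = diagonal ![0, 0, (r : ℝ)] := by
  ext i k
  fin_cases i <;> fin_cases k <;>
    simp [rotationZ, Matrix.sum_apply, sum_range_cos_mul_two_pi_div hr,
      sum_range_sin_mul_two_pi_div hr]

theorem toE3_sum {ι : Type*} (s : Finset ι) (v : ι → Fin 3 → ℝ) :
    toE3 (∑ j ∈ s, v j) = ∑ j ∈ s, toE3 (v j) :=
  map_sum (EuclideanSpace.equiv (Fin 3) ℝ).symm v s

theorem stmt7_general (r : ℕ) (hr : 2 ≤ r) (θ : ℝ) (hθ : θ = 2 * Real.pi / r)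
    (R : Matrix (Fin 3) (Fin 3) ℝ)
    (hR : R = !![Real.cos θ, Real.sin θ, 0;
                 -Real.sin θ, Real.cos θ, 0;
                 0, 0, 1])
    (z : ℝ) (q : Fin 3 → ℝ) :
    ∑ j ∈ Finset.range r,
        (‖toE3 (![0, 0, z] - (R ^ j).mulVec q)‖ ^ 3)⁻¹ •
          toE3 (![0, 0, z] - (R ^ j).mulVec q)
      = toE3 ![0, 0, (r : ℝ) * (z - q 2) / ‖toE3 (![0, 0, z] - q)‖ ^ 3] := by
  have hR' : R = rotationZ θ := hR
  subst hR' hθ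
  have hterm (j : ℕ) : ![0, 0, z] - rotationZ (2 * π / r) ^ j *ᵥ q
      = rotationZ (j * (2 * π / r)) *ᵥ (![0, 0, z] - q) := by
    rw [rotationZ_pow, mulVec_sub, rotationZ_mulVec_axis]
  simp only [hterm, norm_toE3_rotationZ_mulVec]
  rw [← smul_sum, ← toE3_sum, ← sum_mulVec, sum_rotationZ_mul_two_pi_div hr]
  ext i
  fin_cases i <;> simp [toE3, mulVec_diagonal, div_eq_inv_mul, vecHead, vecTail]

/-- For R the rotation by 2π/r about the z-axis (r ≥ 2), z ∈ ℝ and q ∈ ℝ³ with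
(0,0,z) ≠ q, the gravitational force sum satisfies
Σ_{j=0}^{r−1} ((0,0,z) − Rʲq)/‖(0,0,z) − Rʲq‖³ = (0, 0, r(z − q₃)/‖(0,0,z) − q‖³):
the force exerted at a point of the axis by a cyclic symmetric configuration is parallel
to the axis. -/
theorem stmt7 (r : ℕ) (hr : 2 ≤ r) (θ : ℝ) (hθ : θ = 2 * Real.pi / r)
    (R : Matrix (Fin 3) (Fin 3) ℝ)
    (hR : R = !![Real.cos θ, Real.sin θ, 0;
                 -Real.sin θ, Real.cos θ, 0;
                 0, 0, 1])
    (z : ℝ) (q : Fin 3 → ℝ) (hne : ![0, 0, z] ≠ q) :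
    ∑ j ∈ Finset.range r,
        (‖toE3 (![0, 0, z] - (R ^ j).mulVec q)‖ ^ 3)⁻¹ •
          toE3 (![0, 0, z] - (R ^ j).mulVec q)
      = toE3 ![0, 0, (r : ℝ) * (z - q 2) / ‖toE3 (![0, 0, z] - q)‖ ^ 3] :=
  stmt7_general r hr θ hθ R hR z q
end

section
/- (Invariance of the axis for the restricted body.) Let r ≥ 2, θ = 2π/r, and let R be the 3×3 rotation matrix about the z-axis with rows (cos θ, sin θ, 0), (−sin θ, cos θ, 0), (0, 0, 1). Let I ⊆ ℝ be an open interval, let c₁,…,c_s : I → ℝ³ be continuous curves (the representatives of the R-symmetric primaries), let m̂₁,…,m̂_s > 0 and m_I > 0 be masses. Suppose q, p : I → ℝ³ are differentiable and satisfy for all t ∈ I: q′(t) = p(t)/m_I and p′(t) = −m_I · Σ_{k=1}^{s} Σ_{j=0}^{r−1} m̂ₖ · (q(t) − Rʲcₖ(t))/‖q(t) − Rʲcₖ(t)‖³, with q(t) ≠ Rʲcₖ(t) for all t, k, j. If at some t₀ ∈ I the initial conditions satisfy q(t₀) = (0, 0, z₀) and p(t₀) = (0, 0, w₀) for some z₀,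 w₀ ∈ ℝ, then for all t ∈ I the first two components of q(t) and of p(t) vanish; i.e., the restricted body evolves in rectilinear motion on the vertical axis. -/
open Set Filter Topology Real Matrix
open scoped NNReal

theorem IsCompact.exists_pos_forall_le_norm_sub {E ι : Type*} [NormedAddCommGroup E] [Finite ι]
    {K : Set ℝ} (hK : IsCompact K) {x : ℝ → E} {y : ℝ → ι → E} (hx : ContinuousOn x K)
    (hy : ∀ i, ContinuousOn (fun t => y t i) K) (hxy : ∀ t ∈ K, ∀ i, x t ≠ y t i) :
    ∃ δ > 0, ∀ t ∈ K, ∀ i, δ ≤ ‖x t - y t i‖ := by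
  have : ∀ i, ∀ᶠ δ in 𝓝[>] (0 : ℝ), ∀ t ∈ K, δ ≤ ‖x t - y t i‖ := by
    intro i
    obtain ⟨δ, hδ, hδK⟩ := hK.exists_forall_le' (hx.sub (hy i)).norm
      fun t ht => norm_pos_iff.2 (sub_ne_zero.2 (hxy t ht i))
    filter_upwards [Ioc_mem_nhdsGT hδ] with δ' hδ' t ht using hδ'.2.trans (hδK t ht)
  obtain ⟨δ, hδK, hδ⟩ := ((eventually_all.2 this).and self_mem_nhdsWithin).exists
  exact ⟨δ, hδ, fun t ht i => hδK i t ht⟩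

theorem pow_finRotate {M : Type*} [Monoid M] {g : M} {r : ℕ} (hg : g ^ r = 1) (j : Fin r) :
    g ^ (finRotate r j : ℕ) = g * g ^ (j : ℕ) := by
  obtain _ | r := r
  · exact j.elim0
  · rw [finRotate_apply, Fin.val_add_one]
    split_ifs with h
    · rw [h, Fin.val_last, ← pow_succ', hg, pow_zero]
    · exact pow_succ' g j

section NewtonField

variable {E ι : Type*} [NormedAddCommGroup E] [NormedSpace ℝ E] [Fintype ι]

noncomputable def newtonField (m : ι → ℝ) (y : ι → E) (x : E) : E :=
  ∑ i, m i • ((‖x - y i‖ ^ 3)⁻¹ • (x - y i))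

theorem dist_inv_norm_pow_three_smul_le {δ : ℝ} (hδ : 0 < δ) {x y : E}
    (hx : δ ≤ ‖x‖) (hy : δ ≤ ‖y‖) :
    dist ((‖x‖ ^ 3)⁻¹ • x) ((‖y‖ ^ 3)⁻¹ • y) ≤ 4 / δ ^ 3 * dist x y := by
  rw [dist_eq_norm, dist_eq_norm]
  generalize hu : ‖x‖ = u at *
  generalize hv : ‖y‖ = v at *
  have hu0 : 0 < u := hδ.trans_le hx
  have hv0 : 0 < v := hδ.trans_le hy
  have hvu : |v - u| ≤ ‖x - y‖ := by
    rw [abs_sub_comm, ← hu, ← hv]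
    exact abs_norm_sub_norm_le x y
  have hsplit : (u ^ 3)⁻¹ • x - (v ^ 3)⁻¹ • y
      = (u ^ 3)⁻¹ • (x - y) + ((v - u) * (v ^ 2 + u * v + u ^ 2) / (u ^ 3 * v ^ 3)) • y := by
    rw [smul_sub, sub_add, ← sub_smul]
    congr 2
    field_simp
    ring
  have hcube : ∀ a b c : ℝ, δ ≤ a → δ ≤ b → δ ≤ c → 1 / (a * b * c) ≤ 1 / δ ^ 3 := by
    intro a b c ha hb hc
    have := hδ.trans_le ha
    have := hδ.trans_le hb
    rw [pow_three, ← mul_assoc]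
    gcongr
  calc ‖(u ^ 3)⁻¹ • x - (v ^ 3)⁻¹ • y‖
      ≤ (u ^ 3)⁻¹ * ‖x - y‖ + |v - u| * (v ^ 2 + u * v + u ^ 2) / (u ^ 3 * v ^ 3) * v := by
        rw [hsplit]
        refine (norm_add_le _ _).trans (le_of_eq ?_)
        rw [norm_smul, norm_smul, Real.norm_eq_abs, Real.norm_eq_abs, abs_of_pos (by positivity),
          abs_div, abs_mul, abs_of_pos (by positivity : (0 : ℝ) < v ^ 2 + u * v + u ^ 2),
          abs_of_pos (by positivity : (0 : ℝ) < u ^ 3 * v ^ 3), hv]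
    _ ≤ (u ^ 3)⁻¹ * ‖x - y‖ + ‖x - y‖ * (v ^ 2 + u * v + u ^ 2) / (u ^ 3 * v ^ 3) * v := by
        gcongr
    _ = ‖x - y‖ * (2 * (1 / (u * u * u)) + 1 / (u * u * v) + 1 / (u * v * v)) := by
        field_simp
        ring
    _ ≤ ‖x - y‖ * (2 * (1 / δ ^ 3) + 1 / δ ^ 3 + 1 / δ ^ 3) := by
        gcongr ‖x - y‖ * (2 * ?_ + ?_ + ?_) <;> apply hcube <;> assumption
    _ = 4 / δ ^ 3 * ‖x - y‖ := by ring

theorem lipschitzOnWith_newtonField {δ : ℝ} (hδ : 0 < δ) (m : ι → ℝ) (y : ι → E) :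
    LipschitzOnWith (Real.toNNReal ((∑ i, ‖m i‖) * (4 / δ ^ 3))) (newtonField m y)
      {x | ∀ i, δ ≤ ‖x - y i‖} := by
  refine LipschitzOnWith.of_dist_le_mul fun x hx x' hx' => ?_
  rw [Real.coe_toNNReal _ (by positivity), Finset.sum_mul, Finset.sum_mul]
  refine (dist_sum_sum_le _ _ _).trans (Finset.sum_le_sum fun i _ => ?_)
  rw [dist_smul₀, mul_assoc]
  gcongr
  simpa using dist_inv_norm_pow_three_smul_le hδ (hx i) (hx' i)

theorem LinearIsometry.map_newtonField (A : E →ₗᵢ[ℝ] E) {σ : Equiv.Perm ι} {m : ι → ℝ}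
    (hm : ∀ i, m (σ i) = m i) {y : ι → E} (hy : ∀ i, A (y i) = y (σ i)) (x : E) :
    A (newtonField m y x) = newtonField m y (A x) := by
  simp only [newtonField, map_sum, map_smul, map_sub, hy]
  conv_rhs => rw [← Equiv.sum_comp σ]
  refine Finset.sum_congr rfl fun i _ => ?_
  rw [hm, ← hy, ← map_sub, A.norm_map]

end NewtonField

section NewtonODE

variable {E ι : Type*} [NormedAddCommGroup E] [NormedSpace ℝ E] [Fintype ι]

theorem ODE_solution_map_eqOn_of_equivariant {v : ℝ → E → E} {s : ℝ → Set E} {K : ℝ≥0}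
    {f : ℝ → E} {a b t₀ : ℝ} (A : E →L[ℝ] E)
    (hv : ∀ t ∈ Ioo a b, LipschitzOnWith K (v t) (s t))
    (hA : ∀ t ∈ Ioo a b, ∀ x, A (v t x) = v t (A x))
    (hf : ∀ t ∈ Ioo a b, HasDerivAt f (v t (f t)) t ∧ f t ∈ s t)
    (hAs : ∀ t ∈ Ioo a b, A (f t) ∈ s t) (ht₀ : t₀ ∈ Ioo a b) (h₀ : A (f t₀) = f t₀) :
    EqOn (A ∘ f) f (Ioo a b) :=
  ODE_solution_unique_of_mem_Ioo hv ht₀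
    (fun t ht => ⟨hA t ht (f t) ▸ A.hasFDerivAt.comp_hasDerivAt t (hf t ht).1, hAs t ht⟩) hf h₀

noncomputable def newtonPhaseField (μ : ℝ) (m : ι → ℝ) (y : ℝ → ι → E) (t : ℝ) (z : E × E) :
    E × E :=
  (μ⁻¹ • z.2, -(μ • newtonField m (y t) z.1))

theorem exists_lipschitzOnWith_newtonPhaseField (μ : ℝ) (m : ι → ℝ) (y : ℝ → ι → E) {δ : ℝ}
    (hδ : 0 < δ) :
    ∃ K, ∀ t, LipschitzOnWith K (newtonPhaseField μ m y t) {z | ∀ i, δ ≤ ‖z.1 - y t i‖} :=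
  ⟨_, fun t => LipschitzOnWith.prodMk
    ((lipschitzWith_smul μ⁻¹).comp LipschitzWith.prod_snd).lipschitzOnWith
    ((lipschitzWith_smul μ).neg.comp_lipschitzOnWith
      ((lipschitzOnWith_newtonField hδ m (y t)).comp LipschitzWith.prod_fst.lipschitzOnWith
        fun _ hz => hz))⟩

theorem LinearIsometry.map_newtonPhaseField (A : E →ₗᵢ[ℝ] E) {σ : Equiv.Perm ι} {m : ι → ℝ}
    (hm : ∀ i, m (σ i) = m i) {y : ℝ → ι → E} (hy : ∀ t i, A (y t i) = y t (σ i)) (μ t : ℝ)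
    (z : E × E) :
    A.toContinuousLinearMap.prodMap A.toContinuousLinearMap (newtonPhaseField μ m y t z) =
      newtonPhaseField μ m y t (A.toContinuousLinearMap.prodMap A.toContinuousLinearMap z) := by
  simp [newtonPhaseField, A.map_newtonField hm (hy t)]

theorem LinearIsometry.map_newton_solution_eq_self (A : E →ₗᵢ[ℝ] E) {σ : Equiv.Perm ι} {m : ι → ℝ}
    (hm : ∀ i, m (σ i) = m i) {y : ℝ → ι → E} (hy : ∀ t i, A (y t i) = y t (σ i))
    {a b μ t₀ : ℝ} (hyc : ∀ i, ContinuousOn (fun t => y t i) (Ioo a b)) {q p : ℝ → E}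
    (hsep : ∀ t ∈ Ioo a b, ∀ i, q t ≠ y t i)
    (hq : ∀ t ∈ Ioo a b, HasDerivAt q (μ⁻¹ • p t) t)
    (hp : ∀ t ∈ Ioo a b, HasDerivAt p (-(μ • newtonField m (y t) (q t))) t)
    (ht₀ : t₀ ∈ Ioo a b) (hq₀ : A (q t₀) = q t₀) (hp₀ : A (p t₀) = p t₀) :
    ∀ t ∈ Ioo a b, A (q t) = q t ∧ A (p t) = p t := by
  intro t₁ ht₁
  -- a uniform distance to the primaries, hence a Lipschitz constant, needs a compact time interval
  obtain ⟨α, haα, hα⟩ := exists_between (lt_min ht₀.1 ht₁.1)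
  obtain ⟨β, hβ, hβb⟩ := exists_between (max_lt ht₀.2 ht₁.2)
  have hsub : Icc α β ⊆ Ioo a b := Icc_subset_Ioo haα hβb
  have hsub' : Ioo α β ⊆ Ioo a b := Ioo_subset_Icc_self.trans hsub
  obtain ⟨δ, hδ, hqδ⟩ := isCompact_Icc.exists_pos_forall_le_norm_sub
    (fun t ht => (hq t (hsub ht)).continuousAt.continuousWithinAt)
    (fun i => (hyc i).mono hsub) fun t ht => hsep t (hsub ht)
  obtain ⟨K, hK⟩ := exists_lipschitzOnWith_newtonPhaseField μ m y hδ
  have hAq : ∀ t ∈ Ioo α β, ∀ i, δ ≤ ‖A (q t) - y t i‖ := by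
    intro t ht i
    obtain ⟨j, rfl⟩ := σ.surjective i
    simpa [← hy, ← map_sub] using hqδ t (Ioo_subset_Icc_self ht) j
  have hfix := ODE_solution_map_eqOn_of_equivariant (v := newtonPhaseField μ m y)
    (f := fun t => (q t, p t)) (A.toContinuousLinearMap.prodMap A.toContinuousLinearMap)
    (fun t _ => hK t) (fun t _ => A.map_newtonPhaseField hm hy μ t)
    (fun t ht => ⟨(hq t (hsub' ht)).prodMk (hp t (hsub' ht)), hqδ t (Ioo_subset_Icc_self ht)⟩)
    hAq ⟨hα.trans_le (min_le_left _ _), (le_max_left _ _).trans_lt hβ⟩ (Prod.ext hq₀ hp₀)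
    ⟨hα.trans_le (min_le_right _ _), (le_max_right _ _).trans_lt hβ⟩
  exact Prod.ext_iff.1 hfix

end NewtonODE

section RotationAboutAxis

noncomputable def rotZ (φ : ℝ) : Matrix (Fin 3) (Fin 3) ℝ :=
  !![cos φ, sin φ, 0; -sin φ, cos φ, 0; 0, 0, 1]

theorem rotZ_add (φ ψ : ℝ) : rotZ (φ + ψ) = rotZ φ * rotZ ψ := by
  ext i j
  fin_cases i <;> fin_cases j <;>
    simp [rotZ, Matrix.mul_apply, Fin.sum_univ_three, cos_add, sin_add] <;> ring

theorem rotZ_zero : rotZ 0 = 1 := by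
  ext i j
  fin_cases i <;> fin_cases j <;> simp [rotZ]

theorem rotZ_pow (φ : ℝ) (n : ℕ) : rotZ φ ^ n = rotZ (n * φ) := by
  induction n with
  | zero => simp [rotZ_zero]
  | succ n ih =>
    rw [pow_succ, ih, ← rotZ_add]
    push_cast
    ring_nf

theorem rotZ_two_pi_div_pow {r : ℕ} (hr : r ≠ 0) : rotZ (2 * π / r) ^ r = 1 := by
  rw [rotZ_pow, mul_div_cancel₀ _ (Nat.cast_ne_zero.2 hr)]
  simp [rotZ, ← rotZ_zero]

theorem cos_two_pi_div_ne_one {r : ℕ} (hr : 2 ≤ r) : cos (2 * π / r) ≠ 1 := by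
  have hr' : (1 : ℝ) < r := by exact_mod_cast hr
  have hpos : 0 < 2 * π / r := div_pos (by positivity) (by linarith)
  rw [Ne, cos_eq_one_iff_of_lt_of_lt (by linarith [pi_pos]) (div_lt_self (by positivity) hr')]
  exact hpos.ne'

theorem rotZ_mulVec (φ : ℝ) (x : Fin 3 → ℝ) :
    rotZ φ *ᵥ x = ![cos φ * x 0 + sin φ * x 1, -sin φ * x 0 + cos φ * x 1, x 2] := by
  ext i
  fin_cases i <;> simp [rotZ, Matrix.vecHead, Matrix.vecTail]

theorem rotZ_mulVec_eq_self_iff {φ : ℝ} (hφ : cos φ ≠ 1) {x : Fin 3 → ℝ} :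
    rotZ φ *ᵥ x = x ↔ x 0 = 0 ∧ x 1 = 0 := by
  constructor
  · intro h
    rw [rotZ_mulVec] at h
    have h0 := congrFun h 0
    have h1 := congrFun h 1
    simp only [Matrix.cons_val_zero, Matrix.cons_val_one] at h0 h1
    have hc : 2 - 2 * cos φ ≠ 0 := fun h => hφ (by linarith)
    constructor <;> refine (mul_eq_zero.1 ?_).resolve_left hc
    · linear_combination (cos φ - 1) * h0 - sin φ * h1 - x 0 * sin_sq_add_cos_sq φ
    · linear_combination sin φ * h0 + (cos φ - 1) * h1 - x 1 * sin_sq_add_cos_sq φ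
  · rintro ⟨h0, h1⟩
    ext i
    fin_cases i <;> simp [rotZ_mulVec, h0, h1]

end RotationAboutAxis

section EuclideanThreeSpace

@[fun_prop]
theorem continuous_toE3 : Continuous toE3 := (EuclideanSpace.equiv (Fin 3) ℝ).symm.continuous

theorem toE3_injective : Function.Injective toE3 := (EuclideanSpace.equiv (Fin 3) ℝ).symm.injective

theorem HasDerivAt.toE3 {f : ℝ → Fin 3 → ℝ} {f' : Fin 3 → ℝ} {t : ℝ} (h : HasDerivAt f f' t) :
    HasDerivAt (fun t => toE3 (f t)) (toE3 f') t :=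
  (EuclideanSpace.equiv (Fin 3) ℝ).symm.hasFDerivAt.comp_hasDerivAt t h

theorem toE3_neg_smul_sum_range {s r : ℕ} (R : Matrix (Fin 3) (Fin 3) ℝ) (c : Fin s → Fin 3 → ℝ)
    (mh : Fin s → ℝ) (μ : ℝ) (x : Fin 3 → ℝ) :
    toE3 (-(μ • ∑ k : Fin s, ∑ j ∈ Finset.range r,
        mh k • ((‖toE3 (x - (R ^ j) *ᵥ c k)‖ ^ 3)⁻¹ • (x - (R ^ j) *ᵥ c k)))) =
      -(μ • newtonField (fun i : Fin s × Fin r => mh i.1)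
        (fun i => toE3 ((R ^ (i.2 : ℕ)) *ᵥ c i.1)) (toE3 x)) := by
  simp only [toE3, newtonField, Fintype.sum_prod_type, Finset.sum_range, map_neg, map_smul,
    map_sum, map_sub]

theorem norm_toE3_rotZ_mulVec (φ : ℝ) (x : Fin 3 → ℝ) : ‖toE3 (rotZ φ *ᵥ x)‖ = ‖toE3 x‖ := by
  simp only [toE3, EuclideanSpace.norm_eq, PiLp.continuousLinearEquiv_symm_apply,
    Real.norm_eq_abs, sq_abs, Fin.sum_univ_three, rotZ_mulVec, cons_val_zero, cons_val_one,
    cons_val]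
  congr 1
  linear_combination (x 0 ^ 2 + x 1 ^ 2) * sin_sq_add_cos_sq φ

noncomputable def rotZIsometry (φ : ℝ) :
    EuclideanSpace ℝ (Fin 3) →ₗᵢ[ℝ] EuclideanSpace ℝ (Fin 3) where
  toLinearMap := Matrix.toLpLin 2 2 (rotZ φ)
  norm_map' x := norm_toE3_rotZ_mulVec φ x.ofLp

theorem rotZIsometry_toE3 (φ : ℝ) (x : Fin 3 → ℝ) :
    rotZIsometry φ (toE3 x) = toE3 (rotZ φ *ᵥ x) :=
  rfl

end EuclideanThreeSpace

theorem stmt9_general (r : ℕ) (hr : 2 ≤ r) (θ : ℝ) (hθ : θ = 2 * Real.pi / r)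
    (R : Matrix (Fin 3) (Fin 3) ℝ)
    (hR : R = !![Real.cos θ, Real.sin θ, 0;
                 -Real.sin θ, Real.cos θ, 0;
                 0, 0, 1])
    (a b : ℝ) (s : ℕ) (c : Fin s → ℝ → (Fin 3 → ℝ))
    (hc : ∀ k, ContinuousOn (c k) (Set.Ioo a b))
    (mh : Fin s → ℝ)
    (mI : ℝ)
    (q p : ℝ → (Fin 3 → ℝ))
    (hsep : ∀ t ∈ Set.Ioo a b, ∀ k : Fin s, ∀ j ∈ Finset.range r,
      q t ≠ (R ^ j).mulVec (c k t))
    (hq : ∀ t ∈ Set.Ioo a b, HasDerivAt q (mI⁻¹ • p t) t)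
    (hp : ∀ t ∈ Set.Ioo a b, HasDerivAt p
      (-(mI • ∑ k : Fin s, ∑ j ∈ Finset.range r,
        mh k • ((‖toE3 (q t - (R ^ j).mulVec (c k t))‖ ^ 3)⁻¹ •
          (q t - (R ^ j).mulVec (c k t))))) t)
    (t₀ : ℝ) (ht₀ : t₀ ∈ Set.Ioo a b) (z₀ w₀ : ℝ)
    (hq0 : q t₀ = ![0, 0, z₀]) (hp0 : p t₀ = ![0, 0, w₀]) :
    ∀ t ∈ Set.Ioo a b, q t 0 = 0 ∧ q t 1 = 0 ∧ p t 0 = 0 ∧ p t 1 = 0 := by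
  have hRθ : R = rotZ θ := hR
  have hRr : R ^ r = 1 := by rw [hRθ, hθ]; exact rotZ_two_pi_div_pow (by omega)
  have hfix : ∀ x : Fin 3 → ℝ, R *ᵥ x = x ↔ x 0 = 0 ∧ x 1 = 0 := fun x => by
    rw [hRθ, rotZ_mulVec_eq_self_iff (hθ ▸ cos_two_pi_div_ne_one hr)]
  have hy : ∀ t (i : Fin s × Fin r), rotZIsometry θ (toE3 ((R ^ (i.2 : ℕ)) *ᵥ c i.1 t)) =
      toE3 ((R ^ (finRotate r i.2 : ℕ)) *ᵥ c i.1 t) := by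
    intro t i
    rw [rotZIsometry_toE3, ← hRθ, mulVec_mulVec, pow_finRotate hRr]
  have hsym := (rotZIsometry θ).map_newton_solution_eq_self
    (σ := Equiv.prodCongr (Equiv.refl (Fin s)) (finRotate r)) (m := fun i => mh i.1)
    (fun _ => rfl) (y := fun t i => toE3 ((R ^ (i.2 : ℕ)) *ᵥ c i.1 t)) hy
    (fun i => by have := hc i.1; fun_prop) (q := fun t => toE3 (q t)) (p := fun t => toE3 (p t))
    (fun t ht i => toE3_injective.ne (hsep t ht i.1 i.2 (Finset.mem_range.2 i.2.2)))
    (fun t ht => (hq t ht).toE3)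
    (fun t ht => by simpa only [toE3_neg_smul_sum_range] using (hp t ht).toE3)
    ht₀ (by rw [hq0, rotZIsometry_toE3, ← hRθ, (hfix _).2 ⟨rfl, rfl⟩])
    (by rw [hp0, rotZIsometry_toE3, ← hRθ, (hfix _).2 ⟨rfl, rfl⟩])
  intro t ht
  obtain ⟨hqt, hpt⟩ := hsym t ht
  rw [rotZIsometry_toE3, ← hRθ, toE3_injective.eq_iff, hfix] at hqt hpt
  exact ⟨hqt.1, hqt.2, hpt.1, hpt.2⟩

/-- Invariance of the axis for the restricted body: if the infinitesimal body of the
restricted N+1 body problem with R-symmetric primaries starts on the vertical axis with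
vertical momentum, then it evolves in rectilinear motion on that axis. -/
theorem stmt9 (r : ℕ) (hr : 2 ≤ r) (θ : ℝ) (hθ : θ = 2 * Real.pi / r)
    (R : Matrix (Fin 3) (Fin 3) ℝ)
    (hR : R = !![Real.cos θ, Real.sin θ, 0;
                 -Real.sin θ, Real.cos θ, 0;
                 0, 0, 1])
    (a b : ℝ) (s : ℕ) (c : Fin s → ℝ → (Fin 3 → ℝ))
    (hc : ∀ k, ContinuousOn (c k) (Set.Ioo a b))
    (mh : Fin s → ℝ) (hmh : ∀ k, 0 < mh k)
    (mI : ℝ) (hmI : 0 < mI)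
    (q p : ℝ → (Fin 3 → ℝ))
    (hsep : ∀ t ∈ Set.Ioo a b, ∀ k : Fin s, ∀ j ∈ Finset.range r,
      q t ≠ (R ^ j).mulVec (c k t))
    (hq : ∀ t ∈ Set.Ioo a b, HasDerivAt q (mI⁻¹ • p t) t)
    (hp : ∀ t ∈ Set.Ioo a b, HasDerivAt p
      (-(mI • ∑ k : Fin s, ∑ j ∈ Finset.range r,
        mh k • ((‖toE3 (q t - (R ^ j).mulVec (c k t))‖ ^ 3)⁻¹ •
          (q t - (R ^ j).mulVec (c k t))))) t)
    (t₀ : ℝ) (ht₀ : t₀ ∈ Set.Ioo a b) (z₀ w₀ : ℝ)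
    (hq0 : q t₀ = ![0, 0, z₀]) (hp0 : p t₀ = ![0, 0, w₀]) :
    ∀ t ∈ Set.Ioo a b, q t 0 = 0 ∧ q t 1 = 0 ∧ p t 0 = 0 ∧ p t 1 = 0 :=
  stmt9_general r hr θ hθ R hR a b s c hc mh mI q p hsep hq hp t₀ ht₀ z₀ w₀ hq0 hp0
end

section
/- Fix real numbers ε and P₁, and Q₁ ≠ 0. The Jacobian matrix of the regularizing transformation ρ: (Q₁,Q₂,P₁,P₂) ↦ (q₁,q₂,p₁,p₂) given by q₁ = Q₂ + ((1−ε)/4)Q₁², q₂ = Q₂ − ((1+ε)/4)Q₁², p₁ = ((1+ε)/2)P₂ + P₁/Q₁, p₂ = ((1−ε)/2)P₂ − P₁/Q₁, namely the 4×4 matrix (in coordinates ordered (q₁,q₂,p₁,p₂) as functions of (Q₁,Q₂,P₁,P₂)) with rows (((1−ε)/2)Q₁, 1, 0, 0), (−((1+ε)/2)Q₁, 1, 0, 0), (−P₁/Q₁², 0, 1/Q₁, (1+ε)/2), (P₁/Q₁², 0, −1/Q₁, (1−ε)/2), is symplectic: MᵀJM = J with J = [[0, I₂], [−I₂, 0]].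 Hence ρ is a local symplectomorphism on {Q₁ ≠ 0}. -/
/-!
With respect to the splitting into positions and momenta the Jacobian of `ρ` is lower
block-triangular, `[[A, 0], [C, D]]`: here `A` is the Jacobian of `(Q₁, Q₂) ↦ (q₁, q₂)`,
`D` the linear part of the momentum transformation and `C` comes from `P₁ / Q₁`. Such a
matrix is symplectic as soon as `Aᵀ D = 1` (the momenta transform by the inverse transpose of
the positions, as for a cotangent lift) and `Aᵀ C` is symmetric (the remaining shear is
Lagrangian). Both are `2 × 2` identities; for the second, `Aᵀ C = diag(-P₁ / Q₁, 0)`.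
-/

open Matrix

theorem Matrix.fromBlocks_zero₁₂_mem_symplecticGroup {l R : Type*} [DecidableEq l] [Fintype l]
    [CommRing R] {A C D : Matrix l l R} (hAC : Aᵀ * C = Cᵀ * A) (hAD : Aᵀ * D = 1) :
    fromBlocks A 0 C D ∈ symplecticGroup l R :=
  SymplecticGroup.fromBlocks_mem_iff.2 ⟨hAC, by simp, by simpa using hAD⟩

-- Mathlib's `J` is `[[0, -1], [1, 0]]`, the negative of the paper's.
theorem Matrix.transpose_mul_reindex_neg_J_mul {l n R : Type*} [DecidableEq l] [Fintype l]
    [Fintype n] [CommRing R] {A : Matrix (l ⊕ l) (l ⊕ l) R} (hA : A ∈ symplecticGroup l R)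
    (e : l ⊕ l ≃ n) :
    (reindex e e A)ᵀ * reindex e e (-J l R) * reindex e e A = reindex e e (-J l R) := by
  rw [transpose_reindex]
  simp only [reindex_apply, submatrix_mul_equiv, Matrix.mul_neg, Matrix.neg_mul,
    SymplecticGroup.mem_iff'.1 hA]

theorem hasFDerivAt_apply_div_apply {ι : Type*} [Fintype ι] {x : ι → ℝ} (j k : ι)
    (hx : x k ≠ 0) :
    HasFDerivAt (fun y : ι → ℝ => y j / y k)
      ((x k)⁻¹ • (ContinuousLinearMap.proj j : (ι → ℝ) →L[ℝ] ℝ)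
        - (x j / x k ^ 2) • ContinuousLinearMap.proj k) x := by
  have hinv := (hasDerivAt_inv hx).comp_hasFDerivAt x (hasFDerivAt_apply (𝕜 := ℝ) k x)
  refine ((hasFDerivAt_apply (𝕜 := ℝ) j x).mul hinv).congr_fderiv ?_
  ext v
  simp only [neg_smul, smul_neg, Function.comp_apply, _root_.add_apply, _root_.neg_apply,
    _root_.smul_apply, _root_.sub_apply, ContinuousLinearMap.proj_apply, smul_eq_mul]
  ring

namespace Sitnikov

noncomputable def regularization (ε : ℝ) (x : Fin 4 → ℝ) : Fin 4 → ℝ :=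
  ![x 1 + (1-ε)/4*(x 0)^2,
    x 1 - (1+ε)/4*(x 0)^2,
    (1+ε)/2*(x 3) + x 2 / x 0,
    (1-ε)/2*(x 3) - x 2 / x 0]

noncomputable def regularizationJacobian (ε Q₁ P₁ : ℝ) : Matrix (Fin 4) (Fin 4) ℝ :=
  !![(1-ε)/2*Q₁, 1, 0, 0;
     -((1+ε)/2*Q₁), 1, 0, 0;
     -(P₁/Q₁^2), 0, 1/Q₁, (1+ε)/2;
     P₁/Q₁^2, 0, -(1/Q₁), (1-ε)/2]

theorem regularizationJacobian_eq_reindex_fromBlocks (ε Q₁ P₁ : ℝ) :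
    regularizationJacobian ε Q₁ P₁ = reindex finSumFinEquiv finSumFinEquiv
      (fromBlocks !![(1-ε)/2*Q₁, 1; -((1+ε)/2*Q₁), 1] 0
        !![-(P₁/Q₁^2), 0; P₁/Q₁^2, 0] !![1/Q₁, (1+ε)/2; -(1/Q₁), (1-ε)/2]) := by
  ext i j
  fin_cases i <;> fin_cases j <;>
    simp [regularizationJacobian, finSumFinEquiv, Fin.addCases, Fin.subNat]

theorem reindex_neg_J_fin_two :
    reindex finSumFinEquiv finSumFinEquiv (-J (Fin 2) ℝ) =
      !![0, 0, 1, 0; 0, 0, 0, 1; -1, 0, 0, 0; 0, -1, 0, 0] := by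
  ext i j
  fin_cases i <;> fin_cases j <;> simp [J, finSumFinEquiv, Fin.addCases, Fin.subNat, one_apply]

theorem regularizationJacobian_symplectic (ε P₁ : ℝ) {Q₁ : ℝ} (hQ : Q₁ ≠ 0) :
    (regularizationJacobian ε Q₁ P₁)ᵀ * !![0, 0, 1, 0; 0, 0, 0, 1; -1, 0, 0, 0; 0, -1, 0, 0]
      * regularizationJacobian ε Q₁ P₁ = !![0, 0, 1, 0; 0, 0, 0, 1; -1, 0, 0, 0; 0, -1, 0, 0] := by
  rw [regularizationJacobian_eq_reindex_fromBlocks, ← reindex_neg_J_fin_two]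
  refine transpose_mul_reindex_neg_J_mul (fromBlocks_zero₁₂_mem_symplecticGroup ?_ ?_) _
  · simp [← Matrix.ext_iff, Fin.forall_fin_two, mul_apply]
    ring
  · simp [← Matrix.ext_iff, Fin.forall_fin_two, mul_apply]
    exact ⟨⟨by field_simp; ring, by ring⟩, by ring⟩

theorem hasFDerivAt_regularization (ε : ℝ) {Q₁ : ℝ} (Q₂ P₁ P₂ : ℝ) (hQ : Q₁ ≠ 0) :
    HasFDerivAt (regularization ε)
      (LinearMap.toContinuousLinearMap (mulVecLin (regularizationJacobian ε Q₁ P₁)))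
      ![Q₁, Q₂, P₁, P₂] := by
  have hdiv := hasFDerivAt_apply_div_apply (x := ![Q₁, Q₂, P₁, P₂]) 2 0 hQ
  have hsq := (hasFDerivAt_apply (𝕜 := ℝ) 0 ![Q₁, Q₂, P₁, P₂]).pow 2
  have h1 := hasFDerivAt_apply (𝕜 := ℝ) 1 ![Q₁, Q₂, P₁, P₂]
  have h3 := hasFDerivAt_apply (𝕜 := ℝ) 3 ![Q₁, Q₂, P₁, P₂]
  refine hasFDerivAt_pi'' fun i => ?_
  fin_cases i
  on_goal 1 => refine (h1.add (hsq.const_mul ((1-ε)/4))).congr_fderiv ?_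
  on_goal 2 => refine (h1.sub (hsq.const_mul ((1+ε)/4))).congr_fderiv ?_
  on_goal 3 => refine ((h3.const_mul ((1+ε)/2)).add hdiv).congr_fderiv ?_
  on_goal 4 => refine ((h3.const_mul ((1-ε)/2)).sub hdiv).congr_fderiv ?_
  all_goals
    ext v
    simp [regularizationJacobian, dotProduct, Fin.sum_univ_four]
    ring

end Sitnikov

open Sitnikov in
/-- The Jacobian matrix of the regularizing transformation
ρ : (Q₁,Q₂,P₁,P₂) ↦ (q₁,q₂,p₁,p₂) of the circular N+2 Sitnikov problem, namely the 4×4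
matrix M with rows (((1−ε)/2)Q₁, 1, 0, 0), (−((1+ε)/2)Q₁, 1, 0, 0),
(−P₁/Q₁², 0, 1/Q₁, (1+ε)/2), (P₁/Q₁², 0, −1/Q₁, (1−ε)/2), is symplectic: MᵀJM = J.
Hence ρ is a local symplectomorphism on {Q₁ ≠ 0}. -/
theorem stmt10 (ε Q₁ Q₂ P₁ P₂ : ℝ) (hQ : Q₁ ≠ 0)
    (M : Matrix (Fin 4) (Fin 4) ℝ)
    (hM : M = !![(1-ε)/2*Q₁, 1, 0, 0;
                 -((1+ε)/2*Q₁), 1, 0, 0;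
                 -(P₁/Q₁^2), 0, 1/Q₁, (1+ε)/2;
                 P₁/Q₁^2, 0, -(1/Q₁), (1-ε)/2])
    (J : Matrix (Fin 4) (Fin 4) ℝ)
    (hJ : J = !![0, 0, 1, 0; 0, 0, 0, 1; -1, 0, 0, 0; 0, -1, 0, 0]) :
    Mᵀ * J * M = J ∧
    HasFDerivAt (fun x : Fin 4 → ℝ =>
        (![x 1 + (1-ε)/4*(x 0)^2,
           x 1 - (1+ε)/4*(x 0)^2,
           (1+ε)/2*(x 3) + x 2 / x 0,
           (1-ε)/2*(x 3) - x 2 / x 0] : Fin 4 → ℝ))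
      (LinearMap.toContinuousLinearMap (Matrix.mulVecLin M))
      ![Q₁, Q₂, P₁, P₂] := by
  subst hM hJ
  exact ⟨regularizationJacobian_symplectic ε P₁ hQ, hasFDerivAt_regularization ε Q₂ P₁ P₂ hQ⟩
end

section
/- Let ε ∈ ℝ with ε² ≠ 1, m, h ∈ ℝ, r > 0, and Q₁ ≠ 0, Q₂, P₁, P₂ ∈ ℝ. Define q₁ = Q₂ + ((1−ε)/4)Q₁², q₂ = Q₂ − ((1+ε)/4)Q₁², p₁ = ((1+ε)/2)P₂ + P₁/Q₁, p₂ = ((1−ε)/2)P₂ − P₁/Q₁. Then ((1−ε²)/2)·Q₁² · ( H(q₁,q₂,p₁,p₂) − h ) = (1/2)·( ((1−ε²)/4)·P₂²Q₁² + P₁² ) − ((1−ε²)/2)·Q₁²·[ (1+ε)/√(q₁² + r²) + (1−ε)/√(q₂² + r²) + h ] − m(1−ε²)², where H(q₁,q₂,p₁,p₂) = p₁²/(2(1+ε)) + p₂²/(2(1−ε)) − (1+ε)/√(q₁²+r²) − (1−ε)/√(q₂²+r²) − m(1−ε²)/(q₁−q₂). In particular, the right-hand side (the regularized Hamiltonian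 Γ) contains no singular term at the binary collision q₁ = q₂ (i.e., at Q₁ = 0). -/
/-! Under the Levi-Civita type substitution, the time-rescaling factor `((1−ε²)/2) Q₁²`
cancels the `1/Q₁²` of the kinetic energy and the `1/(q₁ − q₂) = 2/Q₁²` of the mutual
attraction, leaving only polynomial terms; the potential of the primaries is untouched. -/

namespace SitnikovRegularization

lemma one_add_ne_zero_and_one_sub_ne_zero {ε : ℝ} (hε : ε ^ 2 ≠ 1) :
    1 + ε ≠ 0 ∧ 1 - ε ≠ 0 := by
  constructor <;> intro h <;> apply hε
  · rw [show ε = -1 by linarith]; norm_num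
  · rw [show ε = 1 by linarith]; norm_num

lemma sub_eq_of_regularizing {ε Q₁ Q₂ q₁ q₂ : ℝ}
    (hq₁ : q₁ = Q₂ + (1-ε)/4*Q₁^2) (hq₂ : q₂ = Q₂ - (1+ε)/4*Q₁^2) :
    q₁ - q₂ = Q₁^2/2 := by
  rw [hq₁, hq₂]; ring

lemma rescaled_kinetic_energy {ε Q₁ : ℝ} (hε₁ : 1 + ε ≠ 0) (hε₂ : 1 - ε ≠ 0) (hQ : Q₁ ≠ 0)
    (P₁ P₂ : ℝ) :
    (1-ε^2)/2 * Q₁^2 *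
        (((1+ε)/2*P₂ + P₁/Q₁)^2/(2*(1+ε)) + ((1-ε)/2*P₂ - P₁/Q₁)^2/(2*(1-ε)))
      = (1/2) * ((1-ε^2)/4 * P₂^2 * Q₁^2 + P₁^2) := by
  field_simp
  ring

lemma rescaled_collision_potential {Q₁ : ℝ} (hQ : Q₁ ≠ 0) (ε m : ℝ) :
    (1-ε^2)/2 * Q₁^2 * (m*(1-ε^2)/(Q₁^2/2)) = m * (1-ε^2)^2 := by
  field_simp

end SitnikovRegularization

open SitnikovRegularization in
theorem stmt11_general (ε m h r : ℝ) (hε : ε ^ 2 ≠ 1)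
    (Q₁ Q₂ P₁ P₂ : ℝ) (hQ : Q₁ ≠ 0)
    (q₁ q₂ p₁ p₂ : ℝ)
    (hq₁ : q₁ = Q₂ + (1-ε)/4*Q₁^2) (hq₂ : q₂ = Q₂ - (1+ε)/4*Q₁^2)
    (hp₁ : p₁ = (1+ε)/2*P₂ + P₁/Q₁) (hp₂ : p₂ = (1-ε)/2*P₂ - P₁/Q₁) :
    (1-ε^2)/2 * Q₁^2 *
        (p₁^2/(2*(1+ε)) + p₂^2/(2*(1-ε))
          - (1+ε)/Real.sqrt (q₁^2 + r^2) - (1-ε)/Real.sqrt (q₂^2 + r^2)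
          - m*(1-ε^2)/(q₁ - q₂) - h)
      = (1/2) * ((1-ε^2)/4 * P₂^2 * Q₁^2 + P₁^2)
        - (1-ε^2)/2 * Q₁^2 *
            ((1+ε)/Real.sqrt (q₁^2 + r^2) + (1-ε)/Real.sqrt (q₂^2 + r^2) + h)
        - m * (1-ε^2)^2 := by
  obtain ⟨hε₁, hε₂⟩ := one_add_ne_zero_and_one_sub_ne_zero hε
  rw [hp₁, hp₂, sub_eq_of_regularizing hq₁ hq₂]
  linear_combination rescaled_kinetic_energy hε₁ hε₂ hQ P₁ P₂
    - rescaled_collision_potential hQ ε m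

/-- Regularization identity for the circular N+2 Sitnikov problem: multiplying (H − h) by
the time-rescaling factor ((1−ε²)/2)Q₁² and substituting the regularizing change of
coordinates yields the regularized Hamiltonian Γ, free of singular terms at the binary
collision Q₁ = 0. -/
theorem stmt11 (ε m h r : ℝ) (hε : ε ^ 2 ≠ 1) (hr : 0 < r)
    (Q₁ Q₂ P₁ P₂ : ℝ) (hQ : Q₁ ≠ 0)
    (q₁ q₂ p₁ p₂ : ℝ)
    (hq₁ : q₁ = Q₂ + (1-ε)/4*Q₁^2) (hq₂ : q₂ = Q₂ - (1+ε)/4*Q₁^2)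
    (hp₁ : p₁ = (1+ε)/2*P₂ + P₁/Q₁) (hp₂ : p₂ = (1-ε)/2*P₂ - P₁/Q₁) :
    (1-ε^2)/2 * Q₁^2 *
        (p₁^2/(2*(1+ε)) + p₂^2/(2*(1-ε))
          - (1+ε)/Real.sqrt (q₁^2 + r^2) - (1-ε)/Real.sqrt (q₂^2 + r^2)
          - m*(1-ε^2)/(q₁ - q₂) - h)
      = (1/2) * ((1-ε^2)/4 * P₂^2 * Q₁^2 + P₁^2)
        - (1-ε^2)/2 * Q₁^2 *
            ((1+ε)/Real.sqrt (q₁^2 + r^2) + (1-ε)/Real.sqrt (q₂^2 + r^2) + h)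
        - m * (1-ε^2)^2 :=
  stmt11_general ε m h r hε Q₁ Q₂ P₁ P₂ hQ q₁ q₂ p₁ p₂ hq₁ hq₂ hp₁ hp₂
end

section
/- (General regularization identity for the R-symmetric N+2 problem.) Let L be a finite index set, bₗ ∈ ℝ³ and m̂ₗ > 0 for ℓ ∈ L, let ε ∈ ℝ with ε² ≠ 1, m, h ∈ ℝ, and Q₁ ≠ 0, Q₂, P₁, P₂ ∈ ℝ. Define z₁ = Q₂ + ((1−ε)/4)Q₁², z₂ = Q₂ − ((1+ε)/4)Q₁², p₁ = ((1+ε)/2)P₂ + P₁/Q₁, p₂ = ((1−ε)/2)P₂ − P₁/Q₁, and assume (0,0,zᵢ) ≠ bₗ for all ℓ and i = 1,2. Then ((1−ε²)/2)·Q₁² · ( Ĥ(z₁,z₂,p₁,p₂) − h ) = (1/2)·( ((1−ε²)/4)·P₂²Q₁² + P₁² ) − ((1−ε²)/2)·Q₁²·[ V₁(Q₁,Q₂) + h ] − m(1−ε²)², where Ĥ(z₁,z₂,p₁,p₂) = p₁²/(2(1+ε)) + p₂²/(2(1−ε)) − (1+ε)·Σₗ m̂ₗ/‖(0,0,z₁)−bₗ‖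 − (1−ε)·Σₗ m̂ₗ/‖(0,0,z₂)−bₗ‖ − m(1−ε²)/(z₁−z₂), and V₁(Q₁,Q₂) = Σₗ m̂ₗ·[ (1+ε)/‖(0,0,z₁)−bₗ‖ + (1−ε)/‖(0,0,z₂)−bₗ‖ ]. In particular the right-hand side is free of singularities due to the binary collision z₁ = z₂. -/
/-! The primary potentials enter both sides identically once the sum is split, so the
identity reduces to two computations: the kinetic energy becomes polynomial after
multiplying by the time-rescaling factor, and the mutual attraction loses its singularity
because `z₁ - z₂ = Q₁² / 2` cancels against the same factor. -/

theorem Finset.sum_mul_div_add_div {ι K : Type*} [Field K] (s : Finset ι) (w x y : ι → K)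
    (a c : K) :
    ∑ i ∈ s, w i * (a / x i + c / y i) = a * ∑ i ∈ s, w i / x i + c * ∑ i ∈ s, w i / y i := by
  simp only [Finset.mul_sum, ← Finset.sum_add_distrib]
  exact Finset.sum_congr rfl fun _ _ => by ring

section Regularization

variable {ε Q₁ : ℝ}

theorem kinetic_energy_regularize (hε : ε ^ 2 ≠ 1) (hQ : Q₁ ≠ 0) (P₁ P₂ : ℝ) :
    (1-ε^2)/2 * Q₁^2 *
        (((1+ε)/2*P₂ + P₁/Q₁)^2/(2*(1+ε)) + ((1-ε)/2*P₂ - P₁/Q₁)^2/(2*(1-ε)))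
      = 1/2 * ((1-ε^2)/4 * P₂^2 * Q₁^2 + P₁^2) := by
  have hplus : 1 + ε ≠ 0 := fun h => hε (by nlinarith)
  have hminus : 1 - ε ≠ 0 := fun h => hε (by nlinarith)
  field_simp
  ring

theorem collision_potential_regularize (hQ : Q₁ ≠ 0) (Q₂ m : ℝ) :
    (1-ε^2)/2 * Q₁^2 * (m*(1-ε^2) / ((Q₂ + (1-ε)/4*Q₁^2) - (Q₂ - (1+ε)/4*Q₁^2)))
      = m * (1-ε^2)^2 := by
  have hgap : (Q₂ + (1-ε)/4*Q₁^2) - (Q₂ - (1+ε)/4*Q₁^2) = Q₁^2/2 := by ring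
  rw [hgap]
  field_simp

end Regularization

theorem stmt12_general {L : Type*} [Fintype L] (b : L → EuclideanSpace ℝ (Fin 3))
    (mh : L → ℝ)
    (ε m h : ℝ) (hε : ε ^ 2 ≠ 1)
    (Q₁ Q₂ P₁ P₂ : ℝ) (hQ : Q₁ ≠ 0)
    (z₁ z₂ p₁ p₂ : ℝ)
    (hz₁ : z₁ = Q₂ + (1-ε)/4*Q₁^2) (hz₂ : z₂ = Q₂ - (1+ε)/4*Q₁^2)
    (hp₁ : p₁ = (1+ε)/2*P₂ + P₁/Q₁) (hp₂ : p₂ = (1-ε)/2*P₂ - P₁/Q₁) :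
    (1-ε^2)/2 * Q₁^2 *
        (p₁^2/(2*(1+ε)) + p₂^2/(2*(1-ε))
          - (1+ε) * ∑ ℓ, mh ℓ / ‖(EuclideanSpace.equiv (Fin 3) ℝ).symm ![0, 0, z₁] - b ℓ‖
          - (1-ε) * ∑ ℓ, mh ℓ / ‖(EuclideanSpace.equiv (Fin 3) ℝ).symm ![0, 0, z₂] - b ℓ‖
          - m*(1-ε^2)/(z₁ - z₂) - h)
      = (1/2) * ((1-ε^2)/4 * P₂^2 * Q₁^2 + P₁^2)
        - (1-ε^2)/2 * Q₁^2 *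
            ((∑ ℓ, mh ℓ *
              ((1+ε) / ‖(EuclideanSpace.equiv (Fin 3) ℝ).symm ![0, 0, z₁] - b ℓ‖
                + (1-ε) / ‖(EuclideanSpace.equiv (Fin 3) ℝ).symm ![0, 0, z₂] - b ℓ‖)) + h)
        - m * (1-ε^2)^2 := by
  rw [Finset.sum_mul_div_add_div]
  subst hz₁ hz₂ hp₁ hp₂
  linear_combination kinetic_energy_regularize hε hQ P₁ P₂
    - collision_potential_regularize (ε := ε) hQ Q₂ m

/-- General regularization identity for the R-symmetric N+2 problem: multiplying
(Ĥ − h) by ((1−ε²)/2)Q₁² and substituting the regularizing change of coordinates yields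
the regularized Hamiltonian, free of singularities at the binary collision z₁ = z₂. -/
theorem stmt12 {L : Type*} [Fintype L] (b : L → EuclideanSpace ℝ (Fin 3))
    (mh : L → ℝ) (hmh : ∀ ℓ, 0 < mh ℓ)
    (ε m h : ℝ) (hε : ε ^ 2 ≠ 1)
    (Q₁ Q₂ P₁ P₂ : ℝ) (hQ : Q₁ ≠ 0)
    (z₁ z₂ p₁ p₂ : ℝ)
    (hz₁ : z₁ = Q₂ + (1-ε)/4*Q₁^2) (hz₂ : z₂ = Q₂ - (1+ε)/4*Q₁^2)
    (hp₁ : p₁ = (1+ε)/2*P₂ + P₁/Q₁) (hp₂ : p₂ = (1-ε)/2*P₂ - P₁/Q₁)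
    (hb₁ : ∀ ℓ, (EuclideanSpace.equiv (Fin 3) ℝ).symm ![0, 0, z₁] ≠ b ℓ)
    (hb₂ : ∀ ℓ, (EuclideanSpace.equiv (Fin 3) ℝ).symm ![0, 0, z₂] ≠ b ℓ) :
    (1-ε^2)/2 * Q₁^2 *
        (p₁^2/(2*(1+ε)) + p₂^2/(2*(1-ε))
          - (1+ε) * ∑ ℓ, mh ℓ / ‖(EuclideanSpace.equiv (Fin 3) ℝ).symm ![0, 0, z₁] - b ℓ‖
          - (1-ε) * ∑ ℓ, mh ℓ / ‖(EuclideanSpace.equiv (Fin 3) ℝ).symm ![0, 0, z₂] - b ℓ‖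
          - m*(1-ε^2)/(z₁ - z₂) - h)
      = (1/2) * ((1-ε^2)/4 * P₂^2 * Q₁^2 + P₁^2)
        - (1-ε^2)/2 * Q₁^2 *
            ((∑ ℓ, mh ℓ *
              ((1+ε) / ‖(EuclideanSpace.equiv (Fin 3) ℝ).symm ![0, 0, z₁] - b ℓ‖
                + (1-ε) / ‖(EuclideanSpace.equiv (Fin 3) ℝ).symm ![0, 0, z₂] - b ℓ‖)) + h)
        - m * (1-ε^2)^2 :=
  stmt12_general b mh ε m h hε Q₁ Q₂ P₁ P₂ hQ z₁ z₂ p₁ p₂ hz₁ hz₂ hp₁ hp₂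
end

section
/- (Invariance of the symmetric plane under the regularized flow.) Let r > 0, m, h ∈ ℝ, and Γ₀(Q₁,Q₂,P₁,P₂) = (1/2)·( (1/4)·P₂²Q₁² + P₁² ) − (1/2)·Q₁²·[ 1/√((Q₂ + Q₁²/4)² + r²) + 1/√((Q₂ − Q₁²/4)² + r²) + h ] − m. Let I ⊆ ℝ be an open interval and (Q₁,Q₂,P₁,P₂) : I → ℝ⁴ a differentiable solution of Hamilton's equations Q₁′ = ∂Γ₀/∂P₁, Q₂′ = ∂Γ₀/∂P₂, P₁′ = −∂Γ₀/∂Q₁, P₂′ = −∂Γ₀/∂Q₂ on I. If Q₂(τ₀) = 0 and P₂(τ₀) = 0 for some τ₀ ∈ I, then Q₂(τ) = 0 and P₂(τ) = 0 for all τ ∈ I. -/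
/-!
Along a solution, `(Q₂, P₂)` solves the non-autonomous ODE `x' = F((Q₁, P₁)(τ), x)`, where `F` is
the `(Q₂, P₂)`-part of the Hamiltonian vector field. Since `r > 0`, `Γ₀` is smooth, so `F` is `C¹`
and hence Lipschitz in `x`, uniformly for the parameter `(Q₁, P₁)` in a compact set. As `Γ₀` is even
in `Q₂` and in `P₂` separately, `F(p, 0) = 0`, so `x ≡ 0` is a solution too, and uniqueness of
solutions on compact time windows gives `(Q₂, P₂) ≡ 0`.
-/

open Set Metric Function

section ParametrizedODE

variable {P E G : Type*} [NormedAddCommGroup P] [NormedSpace ℝ P] [ProperSpace P]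
  [NormedAddCommGroup E] [NormedSpace ℝ E] [ProperSpace E] [NormedAddCommGroup G] [NormedSpace ℝ G]

theorem ContDiff.exists_lipschitzOnWith_closedBall_uncurry {F : P → E → G}
    (hF : ContDiff ℝ 1 (uncurry F)) (R : ℝ) :
    ∃ K, ∀ p ∈ closedBall (0 : P) R, LipschitzOnWith K (F p) (closedBall 0 R) := by
  obtain ⟨K, hK⟩ := hF.contDiffOn.exists_lipschitzOnWith one_ne_zero (convex_closedBall 0 R)
    (isCompact_closedBall 0 R)
  refine ⟨K, fun p hp => ?_⟩
  have := hK.comp (LipschitzWith.prodMk_left p).lipschitzOnWith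
    (s := closedBall (0 : E) R) fun x hx => by simpa [Prod.norm_def] using And.intro hp hx
  rwa [mul_one] at this

theorem ODE_solution_unique_of_contDiff_of_continuousOn {F : P → E → E}
    (hF : ContDiff ℝ 1 (uncurry F)) {c : ℝ → P} {x y : ℝ → E} {a b t₀ : ℝ}
    (hc : ContinuousOn c (Ioo a b))
    (hx : ∀ t ∈ Ioo a b, HasDerivAt x (F (c t) (x t)) t)
    (hy : ∀ t ∈ Ioo a b, HasDerivAt y (F (c t) (y t)) t)
    (ht₀ : t₀ ∈ Ioo a b) (heq : x t₀ = y t₀) : EqOn x y (Ioo a b) := by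
  intro τ hτ
  obtain ⟨a', ha, ha'⟩ := exists_between (lt_min hτ.1 ht₀.1)
  obtain ⟨b', hb', hb⟩ := exists_between (max_lt hτ.2 ht₀.2)
  have hsub : Icc a' b' ⊆ Ioo a b := Icc_subset_Ioo ha hb
  have hcont : ContinuousOn (fun t => (c t, x t, y t)) (Icc a' b') :=
    (hc.prodMk ((HasDerivAt.continuousOn hx).prodMk (HasDerivAt.continuousOn hy))).mono hsub
  obtain ⟨R, hR⟩ := isCompact_Icc.exists_bound_of_continuousOn hcont
  have hbound : ∀ t ∈ Ioo a' b', ‖c t‖ ≤ R ∧ ‖x t‖ ≤ R ∧ ‖y t‖ ≤ R := fun t ht => by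
    simpa only [Prod.norm_def, max_le_iff] using hR t (Ioo_subset_Icc_self ht)
  obtain ⟨K, hK⟩ := hF.exists_lipschitzOnWith_closedBall_uncurry R
  refine ODE_solution_unique_of_mem_Ioo (s := fun _ => closedBall 0 R)
    (fun t ht => hK _ (mem_closedBall_zero_iff.2 (hbound t ht).1))
    ⟨ha'.trans_le (min_le_right _ _), (le_max_right _ _).trans_lt hb'⟩
    (fun t ht => ⟨hx t (hsub (Ioo_subset_Icc_self ht)),
      mem_closedBall_zero_iff.2 (hbound t ht).2.1⟩)
    (fun t ht => ⟨hy t (hsub (Ioo_subset_Icc_self ht)),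
      mem_closedBall_zero_iff.2 (hbound t ht).2.2⟩)
    heq ⟨ha'.trans_le (min_le_left _ _), (le_max_left _ _).trans_lt hb'⟩

end ParametrizedODE

theorem Function.Even.deriv_zero {𝕜 F : Type*} [NontriviallyNormedField 𝕜]
    [NormedAddCommGroup F] [NormedSpace 𝕜 F] [IsAddTorsionFree F] {f : 𝕜 → F} (hf : f.Even) :
    deriv f 0 = 0 := by
  have h := deriv_comp_neg (f := f) (x := 0)
  simp only [hf _, neg_zero] at h
  exact self_eq_neg.mp h

/-- The `(Q₂, P₂)`-components of the Hamiltonian vector field of `Γ`, at `p = (Q₁, P₁)` and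
`x = (Q₂, P₂)`. -/
noncomputable def hamiltonianFieldQ₂P₂ (Γ : ℝ → ℝ → ℝ → ℝ → ℝ) (p x : ℝ × ℝ) : ℝ × ℝ :=
  (deriv (fun y => Γ p.1 x.1 p.2 y) x.2, -deriv (fun y => Γ p.1 y p.2 x.2) x.1)

theorem contDiff_uncurry_hamiltonianFieldQ₂P₂ {Γ : ℝ → ℝ → ℝ → ℝ → ℝ}
    (hΓ : ContDiff ℝ 2 fun z : ℝ × ℝ × ℝ × ℝ => Γ z.1 z.2.1 z.2.2.1 z.2.2.2) :
    ContDiff ℝ 1 (uncurry (hamiltonianFieldQ₂P₂ Γ)) := by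
  have hP : ContDiff ℝ 2 fun w : ((ℝ × ℝ) × (ℝ × ℝ)) × ℝ => Γ w.1.1.1 w.1.2.1 w.1.1.2 w.2 :=
    hΓ.comp (by fun_prop : ContDiff ℝ 2 fun w : ((ℝ × ℝ) × (ℝ × ℝ)) × ℝ =>
      (w.1.1.1, w.1.2.1, w.1.1.2, w.2))
  have hQ : ContDiff ℝ 2 fun w : ((ℝ × ℝ) × (ℝ × ℝ)) × ℝ => Γ w.1.1.1 w.2 w.1.1.2 w.1.2.2 :=
    hΓ.comp (by fun_prop : ContDiff ℝ 2 fun w : ((ℝ × ℝ) × (ℝ × ℝ)) × ℝ =>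
      (w.1.1.1, w.2, w.1.1.2, w.1.2.2))
  -- `deriv g y` unfolds to `fderiv ℝ g y 1`
  exact ((hP.fderiv (by fun_prop) le_rfl).clm_apply contDiff_const).prodMk
    ((hQ.fderiv (by fun_prop) le_rfl).clm_apply contDiff_const).neg

theorem hamiltonianFieldQ₂P₂_zero {Γ : ℝ → ℝ → ℝ → ℝ → ℝ}
    (hQ₂ : ∀ Q₁ Q₂ P₁ P₂, Γ Q₁ (-Q₂) P₁ P₂ = Γ Q₁ Q₂ P₁ P₂)
    (hP₂ : ∀ Q₁ Q₂ P₁ P₂, Γ Q₁ Q₂ P₁ (-P₂) = Γ Q₁ Q₂ P₁ P₂) (p : ℝ × ℝ) :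
    hamiltonianFieldQ₂P₂ Γ p 0 = 0 := by
  simp [hamiltonianFieldQ₂P₂, Function.Even.deriv_zero (hP₂ _ _ _),
    Function.Even.deriv_zero (f := fun y => Γ p.1 y p.2 0) (hQ₂ p.1 · p.2 0)]

noncomputable def sitnikovHamiltonian (r m h Q₁ Q₂ P₁ P₂ : ℝ) : ℝ :=
  (1/2) * ((1/4) * P₂^2 * Q₁^2 + P₁^2)
    - (1/2) * Q₁^2 *
        (1 / Real.sqrt ((Q₂ + Q₁^2/4)^2 + r^2) + 1 / Real.sqrt ((Q₂ - Q₁^2/4)^2 + r^2) + h)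
    - m

theorem contDiff_sitnikovHamiltonian {r : ℝ} (m h : ℝ) (hr : 0 < r) {n : WithTop ℕ∞} :
    ContDiff ℝ n fun z : ℝ × ℝ × ℝ × ℝ => sitnikovHamiltonian r m h z.1 z.2.1 z.2.2.1 z.2.2.2 := by
  unfold sitnikovHamiltonian
  fun_prop (disch := exact fun _ => by positivity)

theorem sitnikovHamiltonian_neg_Q₂ (r m h Q₁ Q₂ P₁ P₂ : ℝ) :
    sitnikovHamiltonian r m h Q₁ (-Q₂) P₁ P₂ = sitnikovHamiltonian r m h Q₁ Q₂ P₁ P₂ := by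
  have e₁ : (-Q₂ + Q₁^2/4)^2 = (Q₂ - Q₁^2/4)^2 := by ring
  have e₂ : (-Q₂ - Q₁^2/4)^2 = (Q₂ + Q₁^2/4)^2 := by ring
  simp only [sitnikovHamiltonian, e₁, e₂]
  ring

theorem sitnikovHamiltonian_neg_P₂ (r m h Q₁ Q₂ P₁ P₂ : ℝ) :
    sitnikovHamiltonian r m h Q₁ Q₂ P₁ (-P₂) = sitnikovHamiltonian r m h Q₁ Q₂ P₁ P₂ := by
  simp only [sitnikovHamiltonian, neg_sq]

/-- Invariance of the symmetric plane under the regularized flow: any solution of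
Hamilton's equations for the regularized Hamiltonian Γ₀ of the circular N+2 Sitnikov
problem (ε = 0) with Q₂(τ₀) = P₂(τ₀) = 0 at some time τ₀ satisfies Q₂ ≡ 0 and P₂ ≡ 0. -/
theorem stmt15 (r m h : ℝ) (hr : 0 < r)
    (Γ : ℝ → ℝ → ℝ → ℝ → ℝ)
    (hΓ : ∀ Q₁ Q₂ P₁ P₂, Γ Q₁ Q₂ P₁ P₂ =
      (1/2) * ((1/4) * P₂^2 * Q₁^2 + P₁^2)
        - (1/2) * Q₁^2 *
            (1 / Real.sqrt ((Q₂ + Q₁^2/4)^2 + r^2)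
              + 1 / Real.sqrt ((Q₂ - Q₁^2/4)^2 + r^2) + h)
        - m)
    (a b : ℝ) (Q₁ Q₂ P₁ P₂ : ℝ → ℝ)
    (hQ₁ : ∀ τ ∈ Set.Ioo a b,
      HasDerivAt Q₁ (deriv (fun y => Γ (Q₁ τ) (Q₂ τ) y (P₂ τ)) (P₁ τ)) τ)
    (hQ₂ : ∀ τ ∈ Set.Ioo a b,
      HasDerivAt Q₂ (deriv (fun y => Γ (Q₁ τ) (Q₂ τ) (P₁ τ) y) (P₂ τ)) τ)
    (hP₁ : ∀ τ ∈ Set.Ioo a b,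
      HasDerivAt P₁ (-(deriv (fun y => Γ y (Q₂ τ) (P₁ τ) (P₂ τ)) (Q₁ τ))) τ)
    (hP₂ : ∀ τ ∈ Set.Ioo a b,
      HasDerivAt P₂ (-(deriv (fun y => Γ (Q₁ τ) y (P₁ τ) (P₂ τ)) (Q₂ τ))) τ)
    (τ₀ : ℝ) (hτ₀ : τ₀ ∈ Set.Ioo a b) (hQ₂0 : Q₂ τ₀ = 0) (hP₂0 : P₂ τ₀ = 0) :
    ∀ τ ∈ Set.Ioo a b, Q₂ τ = 0 ∧ P₂ τ = 0 := by
  obtain rfl : Γ = sitnikovHamiltonian r m h := by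
    funext Q₁ Q₂ P₁ P₂
    exact hΓ Q₁ Q₂ P₁ P₂
  have hF0 := hamiltonianFieldQ₂P₂_zero (sitnikovHamiltonian_neg_Q₂ r m h)
    (sitnikovHamiltonian_neg_P₂ r m h)
  have hsol : ∀ t ∈ Ioo a b, HasDerivAt (fun t => (Q₂ t, P₂ t))
      (hamiltonianFieldQ₂P₂ (sitnikovHamiltonian r m h) (Q₁ t, P₁ t) (Q₂ t, P₂ t)) t :=
    fun t ht => (hQ₂ t ht).prodMk (hP₂ t ht)
  have hzero : ∀ t ∈ Ioo a b, HasDerivAt (fun _ => (0 : ℝ × ℝ))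
      (hamiltonianFieldQ₂P₂ (sitnikovHamiltonian r m h) (Q₁ t, P₁ t) 0) t :=
    fun t _ => by rw [hF0]; exact hasDerivAt_const t 0
  have hEq := ODE_solution_unique_of_contDiff_of_continuousOn
    (contDiff_uncurry_hamiltonianFieldQ₂P₂ (contDiff_sitnikovHamiltonian m h hr))
    ((HasDerivAt.continuousOn hQ₁).prodMk (HasDerivAt.continuousOn hP₁)) hsol hzero hτ₀
    (by simp [hQ₂0, hP₂0])
  exact fun τ hτ => Prod.ext_iff.mp (hEq hτ)
end
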